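/- If q is a prime dividing a^n + 1 but not dividing a^d + 1 for any proper divisor d of n with n/d odd, and q does not divide 2a, then q ≡ 1 (mod 2n). -/
import Mathlib
set_option maxHeartbeats 1000000 in


theorem stmt_6 (a n q : ℕ) (ha : 2 ≤ a) (hn : 1 ≤ n) (hq : q.Prime)
    (hdvd : q ∣ a ^ n + 1)
    (hprim : ∀ d : ℕ, d ∣ n → d ≠ n → Odd (n / d) → ¬ q ∣ a ^ d + 1)
    (h2a : ¬ q ∣ 2 * a) :
    q % (2 * n) = 1 := by
  haveI : Fact q.Prime := ⟨hq⟩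
  have hq2 : q ≠ 2 := by
    rintro rfl
    exact h2a ⟨a, rfl⟩
  have hqa : ¬ q ∣ a := fun h => h2a (h.mul_left 2)
  have hq2' : 2 < q := lt_of_le_of_ne hq.two_le (Ne.symm hq2)
  have hne : (-1 : ZMod q) ≠ 1 := by
    haveI : Fact (2 < q) := ⟨hq2'⟩
    exact ZMod.neg_one_ne_one
  have ha0 : (a : ZMod q) ≠ 0 := by
    simpa [ZMod.natCast_eq_zero_iff] using hqa
  have han : (a : ZMod q) ^ n = -1 := by
    have h : ((a ^ n + 1 : ℕ) : ZMod q) = 0 :=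
      (ZMod.natCast_eq_zero_iff _ _).mpr hdvd
    push_cast at h
    linear_combination h
  set o := orderOf (a : ZMod q) with ho
  have ho2n : o ∣ 2 * n := by
    apply orderOf_dvd_of_pow_eq_one
    rw [pow_mul', han]
    ring
  have hopos : 0 < o := by
    rcases Nat.eq_zero_or_pos o with h | h
    · rw [h] at ho2n
      rw [zero_dvd_iff] at ho2n
      omega
    · exact h
  have honn : ¬ o ∣ n := by
    intro h
    exact hne (han ▸ (orderOf_dvd_iff_pow_eq_one.mp h))
  have hoe : Even o := by
    rcases Nat.even_or_odd o with h | h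
    · exact h
    · exact absurd ((Nat.Coprime.dvd_of_dvd_mul_left
        (h.coprime_two_right) ho2n)) honn
  obtain ⟨e, he⟩ := hoe
  have he2 : o = 2 * e := by omega
  have hepos : 0 < e := by omega
  have hae2 : ((a : ZMod q) ^ e) * ((a : ZMod q) ^ e) = 1 := by
    have := pow_orderOf_eq_one (a : ZMod q)
    rw [← ho] at this
    rw [he2, pow_mul'] at this
    rw [← this]; ring
  have hae : (a : ZMod q) ^ e = -1 := by
    rcases mul_self_eq_one_iff.mp hae2 with h | h
    · exfalso
      have : o ∣ e := orderOf_dvd_iff_pow_eq_one.mpr h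
      have := Nat.le_of_dvd hepos this
      omega
    · exact h
  have hedn : e ∣ n := (Nat.mul_dvd_mul_iff_left (by norm_num : 0 < 2)).mp (he2 ▸ ho2n)
  have hodd : Odd (n / e) := by
    by_contra hc
    rw [Nat.not_odd_iff_even] at hc
    obtain ⟨k, hk⟩ := hc
    have hnek : n = e * (2 * k) := by
      rw [← Nat.mul_div_cancel' hedn, hk]
      ring
    have : (a : ZMod q) ^ n = 1 := by
      rw [hnek, pow_mul, pow_mul, hae]
      simp
    exact hne (han ▸ this)
  have heq : e = n := by
    by_contra hc
    apply hprim e hedn hc hodd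
    have : ((a ^ e + 1 : ℕ) : ZMod q) = 0 := by
      push_cast
      rw [hae]; ring
    exact (ZMod.natCast_eq_zero_iff _ _).mp this
  have ho2 : o = 2 * n := by omega
  have hdvd1 : 2 * n ∣ q - 1 := by
    rw [← ho2]
    exact ho ▸ orderOf_dvd_of_pow_eq_one (ZMod.pow_card_sub_one_eq_one ha0)
  obtain ⟨k, hk⟩ := hdvd1
  have hqe : q = 2 * n * k + 1 := by omega
  rw [hqe, Nat.mul_add_mod]
  exact Nat.mod_eq_of_lt (by omega)
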